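/- arXiv:2603.05335 — 3 statements merged into one kernel-verified Lean document; each statement's English description precedes it below -/
import Mathlib

section
/- Let D be a compact topological space, k a positive natural number, and R : Fin k → D → [0,∞] a family of lower semicontinuous functions. Let S = { (R 1 δ, …, R k δ) : δ ∈ D } ⊆ [0,∞]^k be the risk set. Then for every point r* in the closure of S (in the product topology of [0,∞]^k) there exists δ* ∈ D with R j δ* ≤ r*_j for every j. In particular, the lower set S⁺ = { r' ∈ [0,∞]^k : ∃ r ∈ S, r ≤ r' coordinatewise } is closed. -/
open scoped ENNReal
open Set

/-!
The set `{(δ, v) | R δ ≤ v}` is closed in `D × [0,∞]^k` because it is an intersection of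
preimages of epigraphs of lower semicontinuous functions. Since `D` is compact, the projection
`D × [0,∞]^k → [0,∞]^k` is a closed map, so the set of vectors dominating some attained risk
vector is closed. It contains the risk set, hence also its closure.
-/

section LowerSemicontinuous

variable {D ι γ : Type*} [TopologicalSpace D] [LinearOrder γ] [TopologicalSpace γ]
  [ClosedIciTopology γ] {F : D → ι → γ}

theorem isClosed_setOf_le_of_lowerSemicontinuous (hF : ∀ i, LowerSemicontinuous (F · i)) :
    IsClosed {p : D × (ι → γ) | F p.1 ≤ p.2} := by
  simp only [Pi.le_def, ofPred_forall]
  exact isClosed_iInter fun i => (hF i).isClosed_epigraph.preimage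
    (f := fun p : D × (ι → γ) => (p.1, p.2 i)) (by fun_prop)

theorem isClosed_setOf_exists_le_of_lowerSemicontinuous [CompactSpace D]
    (hF : ∀ i, LowerSemicontinuous (F · i)) :
    IsClosed {v : ι → γ | ∃ δ, F δ ≤ v} := by
  have hImage : {v : ι → γ | ∃ δ, F δ ≤ v} = Prod.snd '' {p : D × (ι → γ) | F p.1 ≤ p.2} := by
    ext v
    simp
  rw [hImage]
  exact isClosedMap_snd_of_compactSpace _ (isClosed_setOf_le_of_lowerSemicontinuous hF)

theorem exists_le_of_mem_closure_range_of_lowerSemicontinuous [CompactSpace D]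
    (hF : ∀ i, LowerSemicontinuous (F · i)) {r : ι → γ} (hr : r ∈ closure (range F)) :
    ∃ δ, F δ ≤ r := by
  have hRange : range F ⊆ {v | ∃ δ, F δ ≤ v} := range_subset_iff.2 fun δ => ⟨δ, le_rfl⟩
  exact closure_minimal hRange (isClosed_setOf_exists_le_of_lowerSemicontinuous hF) hr

end LowerSemicontinuous

theorem risk_set_lower_comprehensive_closed_general {D : Type*} [TopologicalSpace D]
    [CompactSpace D] (k : ℕ) (R : Fin k → D → ℝ≥0∞)
    (hR : ∀ j, LowerSemicontinuous (R j)) :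
    (∀ rstar ∈ closure {v : Fin k → ℝ≥0∞ | ∃ δ : D, ∀ j, v j = R j δ},
      ∃ δstar : D, ∀ j, R j δstar ≤ rstar j) ∧
    IsClosed {r' : Fin k → ℝ≥0∞ |
      ∃ r ∈ {v : Fin k → ℝ≥0∞ | ∃ δ : D, ∀ j, v j = R j δ}, ∀ j, r j ≤ r' j} := by
  set F : D → Fin k → ℝ≥0∞ := fun δ j => R j δ
  have hRisk : {v : Fin k → ℝ≥0∞ | ∃ δ : D, ∀ j, v j = R j δ} = range F := by
    ext v
    simp only [mem_ofPred_eq, mem_range, funext_iff, F, eq_comm]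
  have hLower : {r' : Fin k → ℝ≥0∞ | ∃ r ∈ range F, ∀ j, r j ≤ r' j} =
      {v | ∃ δ, F δ ≤ v} := by
    ext v
    simp [Pi.le_def]
  rw [hRisk, hLower]
  exact ⟨fun r hr => exists_le_of_mem_closure_range_of_lowerSemicontinuous hR hr,
    isClosed_setOf_exists_le_of_lowerSemicontinuous hR⟩

/-- For lower semicontinuous risks on a compact decision space,
every point of the closure of the risk set is coordinatewise dominated by an
attained risk vector; in particular the lower set of the risk set is closed. -/
theorem risk_set_lower_comprehensive_closed {D : Type*} [TopologicalSpace D]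
    [CompactSpace D] (k : ℕ) (hk : 0 < k) (R : Fin k → D → ℝ≥0∞)
    (hR : ∀ j, LowerSemicontinuous (R j)) :
    (∀ rstar ∈ closure {v : Fin k → ℝ≥0∞ | ∃ δ : D, ∀ j, v j = R j δ},
      ∃ δstar : D, ∀ j, R j δstar ≤ rstar j) ∧
    IsClosed {r' : Fin k → ℝ≥0∞ |
      ∃ r ∈ {v : Fin k → ℝ≥0∞ | ∃ δ : D, ∀ j, v j = R j δ}, ∀ j, r j ≤ r' j} :=
  risk_set_lower_comprehensive_closed_general k R hR
end

section
/- Let k be a positive natural number, S ⊆ ℝ^k a convex set, and r* ∈ S a Pareto-minimal point of S, i.e., there is no r ∈ S with r ≤ r* coordinatewise and r ≠ r*. Then there exists π ∈ ℝ^k with π_j ≥ 0 for every j, π ≠ 0, such that ⟨π, r*⟩ ≤ ⟨π, r⟩ for every r ∈ S, where ⟨·,·⟩ is the standard inner product on ℝ^k. -/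
/-!
Separate `S` by Hahn–Banach from the open convex orthant `{x | ∀ j, x j < r* j}`, which it
misses by Pareto-minimality. The separating functional is bounded above on the orthant, which
is stable under moving down along any coordinate axis, so its coefficients are nonnegative;
and `r*` lies in the closure of the orthant, so the functional attains its minimum over `S`
at `r*`.
-/

open Set

variable {ι : Type*} [Fintype ι]

lemma nonneg_of_forall_sub_mul_lt {a b u : ℝ} (h : ∀ t : ℝ, 0 ≤ t → a - t * b < u) : 0 ≤ b := by
  by_contra! hb
  have hau : 0 ≤ u - a := by linarith [h 0 le_rfl]
  have := h ((u - a) / -b) (div_nonneg hau (by linarith))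
  rw [div_mul_eq_mul_div, div_neg, sub_neg_eq_add, mul_div_cancel_right₀ _ hb.ne] at this
  linarith

lemma LinearMap.apply_eq_sum_mul_single [DecidableEq ι] (f : (ι → ℝ) →ₗ[ℝ] ℝ) (x : ι → ℝ) :
    f x = ∑ j, f (Pi.single j 1) * x j := by
  conv_lhs => rw [← (LinearEquiv.piRing ℝ ℝ ι ℝ).symm_apply_apply f, LinearEquiv.piRing_symm_apply]
  simp only [LinearEquiv.piRing_apply, smul_eq_mul, mul_comm]

theorem exists_dual_nonneg_single_le_of_forall_not_lt [DecidableEq ι] {S : Set (ι → ℝ)}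
    (hS : Convex ℝ S) (hne : S.Nonempty) {a : ι → ℝ} (ha : ∀ r ∈ S, ¬ ∀ j, r j < a j) :
    ∃ f : StrongDual ℝ (ι → ℝ), f ≠ 0 ∧ (∀ j, 0 ≤ f (Pi.single j 1)) ∧ ∀ r ∈ S, f a ≤ f r := by
  set O : Set (ι → ℝ) := univ.pi fun j => Iio (a j)
  have hdisj : Disjoint O S :=
    disjoint_left.2 fun r hrO hrS => ha r hrS fun j => hrO j (mem_univ j)
  obtain ⟨f, u, hfO, hfS⟩ :=
    geometric_hahn_banach_open (convex_pi fun j _ => convex_Iio (a j))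
      (isOpen_set_pi finite_univ fun j _ => isOpen_Iio) hS hdisj
  have hbelow : ∀ j (t : ℝ), 0 ≤ t → a - 1 - t • Pi.single j 1 ∈ O := by
    intro j t ht i _
    have : 0 ≤ t * (Pi.single j 1 : ι → ℝ) i :=
      mul_nonneg ht ((Pi.single_nonneg.2 zero_le_one : (0 : ι → ℝ) ≤ Pi.single j 1) i)
    simp only [Pi.sub_apply, Pi.one_apply, Pi.smul_apply, smul_eq_mul, mem_Iio]
    linarith
  have hfa : f a ≤ u := by
    have ha_mem : a ∈ closure O := by
      rw [closure_pi_set]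
      exact fun j _ => by simp [closure_Iio]
    exact closure_minimal (fun x hx => (hfO x hx).le)
      (isClosed_le f.continuous continuous_const) ha_mem
  refine ⟨f, ?_, fun j => ?_, fun r hr => hfa.trans (hfS r hr)⟩
  · rintro rfl
    obtain ⟨b, hb⟩ := hne
    have hO : a - 1 ∈ O := fun j _ => by simp
    have := (hfO _ hO).trans_le (hfS b hb)
    simp at this
  · refine nonneg_of_forall_sub_mul_lt (a := f (a - 1)) (u := u) fun t ht => ?_
    simpa using hfO _ (hbelow j t ht)

theorem exists_nonneg_weights_le_of_forall_not_lt {S : Set (ι → ℝ)} (hS : Convex ℝ S)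
    (hne : S.Nonempty) {a : ι → ℝ} (ha : ∀ r ∈ S, ¬ ∀ j, r j < a j) :
    ∃ π : ι → ℝ, (∀ j, 0 ≤ π j) ∧ π ≠ 0 ∧ ∀ r ∈ S, ∑ j, π j * a j ≤ ∑ j, π j * r j := by
  classical
  obtain ⟨f, hf0, hf_nonneg, hf_le⟩ := exists_dual_nonneg_single_le_of_forall_not_lt hS hne ha
  have hf : ∀ x, f x = ∑ j, f (Pi.single j 1) * x j := fun x =>
    LinearMap.apply_eq_sum_mul_single f.toLinearMap x
  refine ⟨fun j => f (Pi.single j 1), hf_nonneg, fun hπ => hf0 ?_, fun r hr => ?_⟩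
  · simp only [funext_iff, Pi.zero_apply] at hπ
    ext x
    simp [hf x, hπ]
  · have := hf_le r hr
    rwa [hf a, hf r] at this

/-- Supporting-hyperplane identification.  A Pareto-minimal point
`r*` of a convex set `S ⊆ ℝ^k` admits a nonzero nonnegative normal `π` with
`⟨π, r*⟩ ≤ ⟨π, r⟩` for all `r ∈ S`. -/
theorem supporting_hyperplane_at_pareto_min (k : ℕ) (hk : 0 < k)
    (S : Set (Fin k → ℝ)) (hS : Convex ℝ S)
    (rstar : Fin k → ℝ) (hrstar : rstar ∈ S)
    (hPareto : ¬ ∃ r ∈ S, (∀ j, r j ≤ rstar j) ∧ r ≠ rstar) :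
    ∃ π : Fin k → ℝ, (∀ j, 0 ≤ π j) ∧ π ≠ 0 ∧
      ∀ r ∈ S, ∑ j, π j * rstar j ≤ ∑ j, π j * r j := by
  refine exists_nonneg_weights_le_of_forall_not_lt hS ⟨rstar, hrstar⟩ fun r hr hlt => hPareto ?_
  refine ⟨r, hr, fun j => (hlt j).le, fun h => ?_⟩
  exact (hlt ⟨0, hk⟩).ne (congrFun h _)
end

section
/- Fix θ ∈ (0,1) and n ≥ 1, and let S_n be a Binomial(n, θ) random variable. With the log-loss ℓ(θ, p) = θ·(−log p) + (1−θ)·(−log(1−p)) ∈ [0,∞] (equal to ∞ when p ∈ {0,1}), the Bayes predictive strictly dominates the plug-in predictor at every parameter value and every sample size: E[ℓ(θ, (S_n + 1/2)/(n+1))] < E[ℓ(θ, S_n/n)] in [0,∞]; in fact the left-hand side is finite and the right-hand side equals ∞. -/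
/-!
Both risks are finite binomial sums `∑_{k ≤ n} C(n,k) θ^k (1-θ)^(n-k) ℓ(θ, q k)`. The Bayes
predictive `q k = (k + 1/2)/(n + 1)` stays inside `(0,1)`, so every term is finite. The plug-in
predictor gives `q 0 = 0`, an outcome of positive probability `(1-θ)^n` with infinite loss.
-/

open scoped ENNReal

/-- `negLog p = -log p ∈ [0,∞]`, with the convention `negLog 0 = ∞`. -/
noncomputable def negLog (p : ℝ) : ℝ≥0∞ :=
  if p = 0 then ⊤ else ENNReal.ofReal (-Real.log p)

/-- The log loss `ℓ(θ,p) = θ·(−log p) + (1−θ)·(−log(1−p)) ∈ [0,∞]`, equal to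
`∞` when `p ∈ {0,1}` and `θ ∈ (0,1)`. -/
noncomputable def logLoss (θ p : ℝ) : ℝ≥0∞ :=
  ENNReal.ofReal θ * negLog p + ENNReal.ofReal (1 - θ) * negLog (1 - p)

open MeasureTheory

lemma logLoss_ne_top {θ p : ℝ} (hp₀ : p ≠ 0) (hp₁ : p ≠ 1) : logLoss θ p ≠ ⊤ := by
  rw [logLoss, negLog, negLog, if_neg hp₀, if_neg (sub_ne_zero.2 hp₁.symm)]
  exact ENNReal.add_ne_top.2
    ⟨ENNReal.mul_ne_top ENNReal.ofReal_ne_top ENNReal.ofReal_ne_top,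
     ENNReal.mul_ne_top ENNReal.ofReal_ne_top ENNReal.ofReal_ne_top⟩

lemma logLoss_zero {θ : ℝ} (hθ : 0 < θ) : logLoss θ 0 = ⊤ := by
  rw [logLoss, negLog, if_pos rfl, ENNReal.mul_top (ENNReal.ofReal_pos.2 hθ).ne', top_add]

lemma lintegral_comp_eq_tsum {Ω α : Type*} [MeasurableSpace Ω] [MeasurableSpace α] [Countable α]
    [MeasurableSingletonClass α] {P : Measure Ω} {S : Ω → α} (hS : Measurable S)
    (g : α → ℝ≥0∞) : ∫⁻ ω, g (S ω) ∂P = ∑' a, g a * P {ω | S ω = a} := by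
  rw [← lintegral_map (measurable_of_countable g) hS, lintegral_countable']
  congr 1 with a
  rw [Measure.map_apply hS (measurableSet_singleton a)]
  rfl

lemma lintegral_comp_eq_sum_binomial {Ω : Type*} [MeasurableSpace Ω] {P : Measure Ω}
    {θ : ℝ} {n : ℕ} {S : Ω → ℕ} (hS : Measurable S)
    (hBin : ∀ k : ℕ,
      P {ω | S ω = k} = ENNReal.ofReal ((n.choose k : ℝ) * θ ^ k * (1 - θ) ^ (n - k)))
    (g : ℕ → ℝ≥0∞) :
    ∫⁻ ω, g (S ω) ∂P = ∑ k ∈ Finset.range (n + 1),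
      g k * ENNReal.ofReal ((n.choose k : ℝ) * θ ^ k * (1 - θ) ^ (n - k)) := by
  rw [lintegral_comp_eq_tsum hS, tsum_eq_sum (s := Finset.range (n + 1)) fun k hk => ?_]
  · simp only [hBin]
  rw [hBin, Nat.choose_eq_zero_of_lt (by simpa using hk)]
  simp

lemma bayesPredictive_mem_Ioo {n k : ℕ} (hk : k ≤ n) :
    ((k : ℝ) + 1 / 2) / (n + 1) ∈ Set.Ioo (0 : ℝ) 1 := by
  have hkn : (k : ℝ) ≤ n := by exact_mod_cast hk
  exact ⟨by positivity, (div_lt_one (by positivity)).2 (by linarith)⟩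

theorem bayes_strictly_dominates_plugin_general {Ω : Type*} [MeasurableSpace Ω]
    (P : MeasureTheory.Measure Ω)
    (θ : ℝ) (hθ : θ ∈ Set.Ioo (0 : ℝ) 1) (n : ℕ)
    (S : Ω → ℕ) (hS : Measurable S)
    (hBin : ∀ k : ℕ,
      P {ω | S ω = k} = ENNReal.ofReal ((n.choose k : ℝ) * θ ^ k * (1 - θ) ^ (n - k))) :
    (∫⁻ ω, logLoss θ (((S ω : ℝ) + 1 / 2) / (n + 1)) ∂P
        < ∫⁻ ω, logLoss θ ((S ω : ℝ) / n) ∂P) ∧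
      (∫⁻ ω, logLoss θ (((S ω : ℝ) + 1 / 2) / (n + 1)) ∂P ≠ ⊤) ∧
      (∫⁻ ω, logLoss θ ((S ω : ℝ) / n) ∂P = ⊤) := by
  obtain ⟨hθ₀, hθ₁⟩ := hθ
  have hBayes : ∫⁻ ω, logLoss θ (((S ω : ℝ) + 1 / 2) / (n + 1)) ∂P ≠ ⊤ := by
    rw [lintegral_comp_eq_sum_binomial hS hBin (fun k => logLoss θ (((k : ℝ) + 1 / 2) / (n + 1)))]
    refine ENNReal.sum_ne_top.2 fun k hk => ENNReal.mul_ne_top ?_ ENNReal.ofReal_ne_top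
    obtain ⟨hq₀, hq₁⟩ := bayesPredictive_mem_Ioo (Finset.mem_range_succ_iff.1 hk)
    exact logLoss_ne_top hq₀.ne' hq₁.ne
  have hPlugin : ∫⁻ ω, logLoss θ ((S ω : ℝ) / n) ∂P = ⊤ := by
    rw [lintegral_comp_eq_sum_binomial hS hBin (fun k => logLoss θ ((k : ℝ) / n))]
    refine ENNReal.sum_eq_top.2 ⟨0, Finset.mem_range.2 n.succ_pos, ?_⟩
    have hzero : ENNReal.ofReal ((1 - θ) ^ n) ≠ 0 :=
      (ENNReal.ofReal_pos.2 (pow_pos (sub_pos.2 hθ₁) n)).ne'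
    simpa [logLoss_zero hθ₀] using ENNReal.top_mul hzero
  exact ⟨hPlugin ▸ hBayes.lt_top, hBayes, hPlugin⟩

/-- In the Bernoulli model with `θ ∈ (0,1)` and `Sₙ` Binomial(n, θ),
the Bayes predictive `(Sₙ + 1/2)/(n+1)` strictly dominates the plug-in `Sₙ/n`
under expected log loss: the Bayes risk is strictly smaller; in fact it is
finite while the plug-in risk is infinite. -/
theorem bayes_strictly_dominates_plugin {Ω : Type*} [MeasurableSpace Ω]
    (P : MeasureTheory.Measure Ω) [MeasureTheory.IsProbabilityMeasure P]
    (θ : ℝ) (hθ : θ ∈ Set.Ioo (0 : ℝ) 1) (n : ℕ) (hn : 1 ≤ n)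
    (S : Ω → ℕ) (hS : Measurable S)
    (hBin : ∀ k : ℕ,
      P {ω | S ω = k} = ENNReal.ofReal ((n.choose k : ℝ) * θ ^ k * (1 - θ) ^ (n - k))) :
    (∫⁻ ω, logLoss θ (((S ω : ℝ) + 1 / 2) / (n + 1)) ∂P
        < ∫⁻ ω, logLoss θ ((S ω : ℝ) / n) ∂P) ∧
      (∫⁻ ω, logLoss θ (((S ω : ℝ) + 1 / 2) / (n + 1)) ∂P ≠ ⊤) ∧
      (∫⁻ ω, logLoss θ ((S ω : ℝ) / n) ∂P = ⊤) :=
  bayes_strictly_dominates_plugin_general P θ hθ n S hS hBin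
end
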